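/- Let (H_V) be a family of boundary kernels indexed by open sets, satisfying the compatibility H_V H_U = H_U whenever V ⊆ U. Let A_r ⊆ A_t for 0 < r < t, with the property that H_{A_r}(x, ·) is supported on K ∪ S_r for x ∈ A_r, that K ⊆ A_tᶜ, and that H_{A_t}(y,·) = ε_y for y ∉ A_t. If ν is a probability measure on S_η with η < r < t < 1, and ν_r := (r/η) (ν H_{A_r})|_{S_r}, then ν_t = (t/r) (ν_r H_{A_t})|_{S_t}, i.e., the measures ν_r (η < r < 1) are compatible. -/

import Mathlib

open MeasureTheory ProbabilityTheory

/-! The compatibility `H_{A_r} H_{A_t} = H_{A_t}` gives `ν H_{A_t} = (ν H_{A_r}) H_{A_t}`.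
Split `ν H_{A_r}` into its parts on `S_r` and off `S_r`. The part off `S_r` is carried by `K`,
where `H_{A_t}` acts as the identity because `K` lies outside `A_t`; as `K` misses `S_t`, this part
contributes nothing on `S_t`. What remains is the identity of the theorem up to the scalar factor
`(t / r) (r / η) = t / η`. -/

namespace MeasureTheory.Measure

variable {α : Type*} [MeasurableSpace α]

lemma bind_eq_self_of_ae_eq_dirac {μ : Measure α} {f : α → Measure α}
    (h : ∀ᵐ x ∂μ, f x = dirac x) : μ.bind f = μ := by
  rw [bind_congr_right h, bind_dirac]

lemma restrict_comp_eq_restrict_comp_restrict {μ : Measure α} {κ : Kernel α α} {K s t : Set α}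
    (hs : MeasurableSet s) (hcarr : μ (K ∪ s)ᶜ = 0) (hκK : ∀ x ∈ K, κ x = dirac x)
    (hKt : Disjoint K t) :
    (κ ∘ₘ μ).restrict t = (κ ∘ₘ μ.restrict s).restrict t := by
  have hcompl_null : μ (Kᶜ ∩ sᶜ) = 0 := by rwa [← Set.compl_union]
  have hfixed : κ ∘ₘ μ.restrict sᶜ = μ.restrict sᶜ := by
    refine bind_eq_self_of_ae_eq_dirac ?_
    have hK : ∀ᵐ x ∂μ.restrict sᶜ, x ∈ K := by
      rwa [ae_iff, restrict_apply' hs.compl]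
    exact hK.mono hκK
  have hoff : (μ.restrict sᶜ).restrict t = 0 := by
    rw [restrict_eq_zero, restrict_apply' hs.compl]
    refine measure_mono_null ?_ hcompl_null
    exact Set.inter_subset_inter_left _ hKt.subset_compl_left
  calc (κ ∘ₘ μ).restrict t
      = (κ ∘ₘ μ.restrict s).restrict t + (κ ∘ₘ μ.restrict sᶜ).restrict t := by
        rw [← restrict_add, ← comp_add, restrict_add_restrict_compl hs]
    _ = (κ ∘ₘ μ.restrict s).restrict t := by rw [hfixed, hoff, add_zero]

end MeasureTheory.Measure

theorem compatible_measures_from_one_level_general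
    {X : Type*} [MeasurableSpace X]
    (K Sr St At : Set X)
    (hSr : MeasurableSet Sr)
    (hdisj_KSt : Disjoint K St)
    (hKAt : Disjoint K At)
    (Hr Ht : Kernel X X)
    -- boundary-kernel property: Dirac outside the set
    (hHt_out : ∀ x ∉ At, Ht x = Measure.dirac x)
    -- compatibility (H₁): H_{A_r} H_{A_t} = H_{A_t}
    (hcomp : Ht.comp Hr = Ht)
    (η r t : NNReal) (hηr : η < r)
    (ν : Measure X)
    -- ν H_{A_r} is carried by K ∪ S_r
    (hcarr : (ν.bind (fun x => Hr x)) (K ∪ Sr)ᶜ = 0) :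
    (t / η : NNReal) • ((ν.bind (fun x => Ht x)).restrict St) =
      (t / r : NNReal) •
        ((((r / η : NNReal) • ((ν.bind (fun x => Hr x)).restrict Sr)).bind
            (fun x => Ht x)).restrict St) := by
  have hHt_K : ∀ x ∈ K, Ht x = Measure.dirac x :=
    fun x hx ↦ hHt_out x (hKAt.notMem_of_mem_left hx)
  have hscalar : t / r * (r / η) = t / η := div_mul_div_cancel₀ (hηr.pos.ne')
  calc (t / η) • (Ht ∘ₘ ν).restrict St
      = (t / η) • (Ht ∘ₘ (Hr ∘ₘ ν)).restrict St := by rw [Measure.comp_assoc, hcomp]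
    _ = (t / η) • (Ht ∘ₘ (Hr ∘ₘ ν).restrict Sr).restrict St := by
        rw [Measure.restrict_comp_eq_restrict_comp_restrict hSr hcarr hHt_K hdisj_KSt]
    _ = (t / r) • (Ht ∘ₘ ((r / η) • (Hr ∘ₘ ν).restrict Sr)).restrict St := by
        rw [Measure.bind_smul, Measure.restrict_smul, smul_smul, hscalar]

/-- Lemma 4.1 of the paper. Given boundary kernels `Hr = H_{A_r}` and
`Ht = H_{A_t}` with the compatibility `H_{A_r} H_{A_t} = H_{A_t}`, a probability
measure `ν` on `S_η` with `η < r < t < 1`, assume `ν H_{A_r}` is carried by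
`K ∪ S_r`, `K` is disjoint from `A_t`, and `H_{A_t}(y,·) = ε_y` for `y ∉ A_t`.
Then `ν_t = (t/r)(ν_r H_{A_t})|_{S_t}`, where `ν_ρ := (ρ/η)(ν H_{A_ρ})|_{S_ρ}`:
the measures `ν_r`, `η < r < 1`, are compatible. -/
theorem compatible_measures_from_one_level
    {X : Type*} [MeasurableSpace X]
    (K Sη Sr St Ar At : Set X)
    (hSr : MeasurableSet Sr) (hSt : MeasurableSet St)
    (hdisj_KSr : Disjoint K Sr) (hdisj_KSt : Disjoint K St)
    (hArAt : Ar ⊆ At) (hKAt : Disjoint K At)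
    (Hr Ht : Kernel X X)
    -- boundary-kernel property: Dirac outside the set
    (hHr_out : ∀ x ∉ Ar, Hr x = Measure.dirac x)
    (hHt_out : ∀ x ∉ At, Ht x = Measure.dirac x)
    -- compatibility (H₁): H_{A_r} H_{A_t} = H_{A_t}
    (hcomp : Ht.comp Hr = Ht)
    (η r t : NNReal) (hη : 0 < η) (hηr : η < r) (hrt : r < t) (ht1 : t < 1)
    (ν : Measure X) [IsProbabilityMeasure ν] (hν : ν Sηᶜ = 0)
    -- ν H_{A_r} is carried by K ∪ S_r
    (hcarr : (ν.bind (fun x => Hr x)) (K ∪ Sr)ᶜ = 0)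
    -- normalization coming from H_{A_r}(x, S_r) = g(x)/r :
    (hnorm : (ν.bind (fun x => Hr x)) Sr = η / r) :
    (t / η : NNReal) • ((ν.bind (fun x => Ht x)).restrict St) =
      (t / r : NNReal) •
        ((((r / η : NNReal) • ((ν.bind (fun x => Hr x)).restrict Sr)).bind
            (fun x => Ht x)).restrict St) :=
  compatible_measures_from_one_level_general K Sr St At hSr hdisj_KSt hKAt Hr Ht hHt_out hcomp η r t
    hηr ν hcarr
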